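/- arXiv:1503.01986 — 5 statements merged into one kernel-verified Lean document; each statement's English description precedes it below -/
import Mathlib

section
/- Strong linear-programming duality for optimal transport: for every (a,b) ∈ S, the infimum of ⟨P,C⟩ over P ∈ P(a,b) is attained and equals the supremum, over all pairs (u,v) ∈ ℝ^{Ma}×ℝ^{Mb} satisfying u_i + v_j ≤ C_{ij} for all i,j, of ⟨a,u⟩ + ⟨b,v⟩, and this supremum is also attained. -/
/-!
The primal minimum is attained because `P(a,b)` is compact. The dual maximum is attained because
replacing a feasible `(u, v)` by its double `C`-transform and then by `(u - c, v + c)` (which does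
not change `⟨a,u⟩ + ⟨b,v⟩` as `∑ a = ∑ b`) lands in a fixed compact set without lowering the
objective. The two values agree by Farkas' lemma: the cone of triples (row sums, column sums,
cost) of nonnegative matrices is closed, since the entries of a nonnegative matrix are bounded by
its row sums; separating `(a, b, r)` from it, for `r` below the primal minimum, gives a
dual-feasible pair of value above `r`.
-/

def transportPolytope {Ma Mb : ℕ} (a : Fin Ma → ℝ) (b : Fin Mb → ℝ) :
    Set (Matrix (Fin Ma) (Fin Mb) ℝ) :=
  {P | (∀ i j, 0 ≤ P i j) ∧ (∀ i, ∑ j, P i j = a i) ∧ (∀ j, ∑ i, P i j = b j)}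

def transportCost {Ma Mb : ℕ} (C P : Matrix (Fin Ma) (Fin Mb) ℝ) : ℝ :=
  ∑ i, ∑ j, P i j * C i j

open Finset
open scoped Matrix

theorem isClosed_image_of_isBounded_inter_preimage {X Y : Type*} [PseudoMetricSpace X]
    [ProperSpace X] [MetricSpace Y] {f : X → Y} (hf : Continuous f) {s : Set X}
    (hs : IsClosed s) (hbdd : ∀ t, Bornology.IsBounded t → Bornology.IsBounded (s ∩ f ⁻¹' t)) :
    IsClosed (f '' s) := by
  refine closure_subset_iff_isClosed.mp fun y hy => ?_
  set t := s ∩ f ⁻¹' Metric.closedBall y 1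
  have ht : IsCompact t := Metric.isCompact_of_isClosed_isBounded
    (hs.inter (Metric.isClosed_closedBall.preimage hf)) (hbdd _ Metric.isBounded_closedBall)
  have hyt : y ∈ closure (f '' t) := by
    refine closure_mono ?_ (Metric.isOpen_ball.inter_closure ⟨Metric.mem_ball_self one_pos, hy⟩)
    rintro _ ⟨hball, x, hx, rfl⟩
    exact ⟨x, ⟨hx, Metric.ball_subset_closedBall hball⟩, rfl⟩
  exact Set.image_mono Set.inter_subset_left ((ht.image hf).isClosed.closure_subset hyt)

section CTransform

variable {ι κ : Type*} [Fintype ι] [Nonempty ι]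

def cTransform (C : Matrix ι κ ℝ) (u : ι → ℝ) (j : κ) : ℝ :=
  univ.inf' univ_nonempty fun i => C i j - u i

variable {C : Matrix ι κ ℝ} {B : ℝ}

theorem add_cTransform_le (u : ι → ℝ) (i : ι) (j : κ) : u i + cTransform C u j ≤ C i j := by
  have := inf'_le (fun i => C i j - u i) (mem_univ i)
  rw [cTransform]
  linarith

theorem le_cTransform {u : ι → ℝ} {v : κ → ℝ} (h : ∀ i j, u i + v j ≤ C i j) (j : κ) :
    v j ≤ cTransform C u j :=
  le_inf' _ _ fun i _ => by linarith [h i j]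

theorem exists_cTransform_eq (u : ι → ℝ) (j : κ) : ∃ i, cTransform C u j = C i j - u i := by
  obtain ⟨i, -, hi⟩ := exists_mem_eq_inf' univ_nonempty fun i => C i j - u i
  exact ⟨i, hi⟩

theorem cTransform_le_cTransform_add (hC : ∀ i j, |C i j| ≤ B) (u : ι → ℝ) (j j' : κ) :
    cTransform C u j ≤ cTransform C u j' + 2 * B := by
  obtain ⟨i, hi⟩ := exists_cTransform_eq (C := C) u j'
  have := add_cTransform_le (C := C) u i j
  have := abs_le.mp (hC i j)
  have := abs_le.mp (hC i j')
  linarith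

theorem abs_cTransform_le (hC : ∀ i j, |C i j| ≤ B) {u : ι → ℝ} {R : ℝ} (hu : ∀ i, |u i| ≤ R)
    (j : κ) : |cTransform C u j| ≤ B + R := by
  obtain ⟨i, hi⟩ := exists_cTransform_eq (C := C) u j
  rw [hi]
  exact (abs_sub _ _).trans (add_le_add (hC i j) (hu i))

end CTransform

section DualProblem

variable {ι κ : Type*} [Fintype ι] [Fintype κ] {a : ι → ℝ} {b : κ → ℝ}

def dualObjective (a : ι → ℝ) (b : κ → ℝ) (u : ι → ℝ) (v : κ → ℝ) : ℝ :=
  ∑ i, a i * u i + ∑ j, b j * v j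

theorem dualObjective_mono (ha : 0 ≤ a) (hb : 0 ≤ b) {u u' : ι → ℝ} {v v' : κ → ℝ}
    (hu : u ≤ u') (hv : v ≤ v') : dualObjective a b u v ≤ dualObjective a b u' v' :=
  add_le_add (sum_le_sum fun i _ => mul_le_mul_of_nonneg_left (hu i) (ha i))
    (sum_le_sum fun j _ => mul_le_mul_of_nonneg_left (hv j) (hb j))

theorem dualObjective_sub_add_const (hab : ∑ i, a i = ∑ j, b j) (u : ι → ℝ) (v : κ → ℝ)
    (c : ℝ) :
    dualObjective a b (fun i => u i - c) (fun j => v j + c) = dualObjective a b u v := by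
  simp only [dualObjective, mul_sub, mul_add, sum_sub_distrib, sum_add_distrib, ← sum_mul, hab]
  ring

theorem dualObjective_smul (a : ι → ℝ) (b : κ → ℝ) (u : ι → ℝ) (v : κ → ℝ) (k : ℝ) :
    dualObjective a b (k • u) (k • v) = k * dualObjective a b u v := by
  simp only [dualObjective, Pi.smul_apply, smul_eq_mul, mul_add, mul_sum, mul_left_comm]

theorem continuous_dualObjective (a : ι → ℝ) (b : κ → ℝ) :
    Continuous fun w : (ι → ℝ) × (κ → ℝ) => dualObjective a b w.1 w.2 := by
  unfold dualObjective
  fun_prop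

theorem map_prod_eq_dualObjective_add [DecidableEq ι] [DecidableEq κ] {F : Type*}
    [FunLike F ((ι → ℝ) × (κ → ℝ) × ℝ) ℝ] [LinearMapClass F ℝ ((ι → ℝ) × (κ → ℝ) × ℝ) ℝ]
    (f : F) (x : ι → ℝ) (y : κ → ℝ) (t : ℝ) :
    f (x, y, t) = dualObjective x y (fun i => f (Pi.single i 1, 0, 0))
      (fun j => f (0, Pi.single j 1, 0)) + t * f (0, 0, 1) := by
  have : (x, y, t) = ∑ i, x i • (Pi.single i 1, 0, 0) + ∑ j, y j • (0, Pi.single j 1, 0) +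
      t • ((0, 0, 1) : (ι → ℝ) × (κ → ℝ) × ℝ) := by
    ext <;> simp [Prod.fst_sum, Prod.snd_sum, Finset.sum_apply, Pi.single_apply]
  rw [this]
  simp only [map_add, map_sum, map_smul, smul_eq_mul, dualObjective]

variable [Nonempty ι] [Nonempty κ] {C : Matrix ι κ ℝ}

theorem exists_bounded_dual_ge (ha : 0 ≤ a) (hb : 0 ≤ b) (hab : ∑ i, a i = ∑ j, b j) {B : ℝ}
    (hC : ∀ i j, |C i j| ≤ B) {u : ι → ℝ} {v : κ → ℝ} (huv : ∀ i j, u i + v j ≤ C i j) :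
    ∃ u' v', (∀ i j, u' i + v' j ≤ C i j) ∧ (∀ i, |u' i| ≤ 2 * B) ∧
      (∀ j, |v' j| ≤ 3 * B) ∧ dualObjective a b u v ≤ dualObjective a b u' v' := by
  have hCt : ∀ j i, |Cᵀ j i| ≤ B := fun j i => hC i j
  set i₀ := Classical.arbitrary ι
  set v₁ := cTransform C u
  set u₁ := cTransform Cᵀ v₁
  set u₂ := fun i => u₁ i - u₁ i₀
  have h₁ : ∀ i j, u₁ i + v₁ j ≤ C i j := fun i j =>
    (add_comm _ _).trans_le (add_cTransform_le (C := Cᵀ) v₁ j i)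
  have hu₂ : ∀ i, |u₂ i| ≤ 2 * B := fun i => abs_le.mpr
    ⟨by linarith [cTransform_le_cTransform_add hCt v₁ i₀ i],
      by linarith [cTransform_le_cTransform_add hCt v₁ i i₀]⟩
  refine ⟨u₂, cTransform C u₂, add_cTransform_le u₂, hu₂,
    fun j => by linarith [abs_cTransform_le hC hu₂ j], ?_⟩
  calc dualObjective a b u v
      ≤ dualObjective a b u₁ v₁ :=
        dualObjective_mono ha hb (le_cTransform (C := Cᵀ) fun j i =>
          (add_comm _ _).trans_le (add_cTransform_le u i j)) (le_cTransform huv)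
    _ = dualObjective a b u₂ (fun j => v₁ j + u₁ i₀) :=
        (dualObjective_sub_add_const hab _ _ _).symm
    _ ≤ dualObjective a b u₂ (cTransform C u₂) :=
        dualObjective_mono ha hb le_rfl
          (le_cTransform fun i j => by simp only [u₂]; linarith [h₁ i j])

theorem exists_optimal_dual (C : Matrix ι κ ℝ) (ha : 0 ≤ a) (hb : 0 ≤ b)
    (hab : ∑ i, a i = ∑ j, b j) :
    ∃ u v, (∀ i j, u i + v j ≤ C i j) ∧ ∀ u' v', (∀ i j, u' i + v' j ≤ C i j) →
      dualObjective a b u' v' ≤ dualObjective a b u v := by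
  obtain ⟨B, hB⟩ := Finite.exists_le fun p : ι × κ => |C p.1 p.2|
  let D := {w : (ι → ℝ) × (κ → ℝ) | ∀ i j, w.1 i + w.2 j ≤ C i j} ∩
    (Set.univ.pi (fun _ => Set.Icc (-(2 * B)) (2 * B)) ×ˢ
      Set.univ.pi (fun _ => Set.Icc (-(3 * B)) (3 * B)))
  have hD : IsCompact D := by
    refine ((isCompact_univ_pi fun _ => isCompact_Icc).prod
      (isCompact_univ_pi fun _ => isCompact_Icc)).inter_left ?_
    simp only [Set.ofPred_forall]
    exact isClosed_iInter fun i => isClosed_iInter fun j =>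
      isClosed_le (by fun_prop) (by fun_prop)
  have hdom : ∀ u v, (∀ i j, u i + v j ≤ C i j) →
      ∃ w ∈ D, dualObjective a b u v ≤ dualObjective a b w.1 w.2 := by
    intro u v huv
    obtain ⟨u', v', h', hu', hv', hle⟩ :=
      exists_bounded_dual_ge ha hb hab (fun i j => hB (i, j)) huv
    exact ⟨(u', v'), ⟨h', fun i _ => abs_le.mp (hu' i), fun j _ => abs_le.mp (hv' j)⟩, hle⟩
  obtain ⟨w₀, hw₀, -⟩ := hdom 0 (cTransform C 0) (add_cTransform_le 0)
  obtain ⟨w, hwD, hwmax⟩ :=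
    hD.exists_isMaxOn ⟨w₀, hw₀⟩ (continuous_dualObjective a b).continuousOn
  refine ⟨w.1, w.2, hwD.1, fun u' v' huv' => ?_⟩
  obtain ⟨w', hw'D, hle⟩ := hdom u' v' huv'
  exact hle.trans (hwmax hw'D)

end DualProblem

section TransportPolytope

variable {Ma Mb : ℕ} {a : Fin Ma → ℝ} {b : Fin Mb → ℝ}

theorem isClosed_transportPolytope (a : Fin Ma → ℝ) (b : Fin Mb → ℝ) :
    IsClosed (transportPolytope a b) := by
  simp only [transportPolytope, Set.ofPred_and, Set.ofPred_forall]
  exact (isClosed_iInter fun i => isClosed_iInter fun j =>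
      isClosed_le (by fun_prop) (by fun_prop)).inter
    ((isClosed_iInter fun i => isClosed_eq (by fun_prop) (by fun_prop)).inter
      (isClosed_iInter fun j => isClosed_eq (by fun_prop) (by fun_prop)))

theorem isCompact_transportPolytope (a : Fin Ma → ℝ) (b : Fin Mb → ℝ) :
    IsCompact (transportPolytope a b) :=
  (isCompact_univ_pi fun i => isCompact_univ_pi fun _ => isCompact_Icc (a := 0) (b := a i))
    |>.of_isClosed_subset (isClosed_transportPolytope a b) fun _ ⟨hP, hrow, _⟩ i _ j _ =>
      ⟨hP i j, hrow i ▸ single_le_sum (fun j _ => hP i j) (mem_univ j)⟩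

theorem transportPolytope_nonempty (ha : 0 ≤ a) (hb : 0 ≤ b) (hab : ∑ i, a i = ∑ j, b j) :
    (transportPolytope a b).Nonempty := by
  refine ⟨fun i j => a i * b j / ∑ i, a i, fun i j => ?_, fun i => ?_, fun j => ?_⟩
  · exact div_nonneg (mul_nonneg (ha i) (hb j)) (sum_nonneg fun i _ => ha i)
  · rw [← sum_div, ← mul_sum, ← hab, mul_div_cancel_of_imp fun h =>
      (sum_eq_zero_iff_of_nonneg fun i _ => ha i).mp h i (mem_univ i)]
  · rw [← sum_div, ← sum_mul, mul_comm, mul_div_cancel_of_imp fun h =>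
      (sum_eq_zero_iff_of_nonneg fun j _ => hb j).mp (hab.symm.trans h) j (mem_univ j)]

theorem continuous_transportCost (C : Matrix (Fin Ma) (Fin Mb) ℝ) :
    Continuous (transportCost C) := by
  unfold transportCost
  fun_prop

theorem dualObjective_eq_sum_mul_add {P : Matrix (Fin Ma) (Fin Mb) ℝ}
    (hP : P ∈ transportPolytope a b) (u : Fin Ma → ℝ) (v : Fin Mb → ℝ) :
    dualObjective a b u v = ∑ i, ∑ j, P i j * (u i + v j) := by
  obtain ⟨-, hrow, hcol⟩ := hP
  simp only [dualObjective, mul_add, sum_add_distrib, ← hrow, ← hcol, sum_mul]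
  rw [sum_comm (f := fun j i => P i j * v j)]

theorem dualObjective_le_transportCost {C P : Matrix (Fin Ma) (Fin Mb) ℝ}
    (hP : P ∈ transportPolytope a b) {u : Fin Ma → ℝ} {v : Fin Mb → ℝ}
    (huv : ∀ i j, u i + v j ≤ C i j) : dualObjective a b u v ≤ transportCost C P := by
  rw [dualObjective_eq_sum_mul_add hP]
  exact sum_le_sum fun i _ => sum_le_sum fun j _ =>
    mul_le_mul_of_nonneg_left (huv i j) (hP.1 i j)

end TransportPolytope

section Farkas

variable {Ma Mb : ℕ} (C : Matrix (Fin Ma) (Fin Mb) ℝ)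

def marginalsAndCost : (Fin Ma → Fin Mb → ℝ) →ₗ[ℝ] (Fin Ma → ℝ) × (Fin Mb → ℝ) × ℝ where
  toFun P := (fun i => ∑ j, P i j, fun j => ∑ i, P i j, transportCost C P)
  map_add' P Q := by
    simp only [transportCost, Pi.add_apply, add_mul, sum_add_distrib]
    rfl
  map_smul' k P := by
    simp only [transportCost, Pi.smul_apply, smul_eq_mul, mul_assoc, ← mul_sum]
    rfl

theorem marginalsAndCost_apply (P : Fin Ma → Fin Mb → ℝ) :
    marginalsAndCost C P = (fun i => ∑ j, P i j, fun j => ∑ i, P i j, transportCost C P) :=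
  rfl

theorem marginalsAndCost_single (i : Fin Ma) (j : Fin Mb) :
    marginalsAndCost C (Pi.single i (Pi.single j 1)) = (Pi.single i 1, Pi.single j 1, C i j) := by
  ext <;> simp [marginalsAndCost_apply, transportCost, Pi.single_apply, ite_apply]

theorem norm_le_norm_marginalsAndCost {P : Fin Ma → Fin Mb → ℝ} (hP : 0 ≤ P) :
    ‖P‖ ≤ ‖marginalsAndCost C P‖ := by
  refine (pi_norm_le_iff_of_nonneg (norm_nonneg _)).mpr fun i =>
    (pi_norm_le_iff_of_nonneg (norm_nonneg _)).mpr fun j => ?_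
  calc ‖P i j‖ = P i j := Real.norm_of_nonneg (hP i j)
    _ ≤ ∑ j, P i j := single_le_sum (fun j _ => hP i j) (mem_univ j)
    _ ≤ ‖(marginalsAndCost C P).1‖ :=
        (Real.le_norm_self _).trans (norm_le_pi_norm (marginalsAndCost C P).1 i)
    _ ≤ ‖marginalsAndCost C P‖ := norm_fst_le _

theorem isClosed_image_marginalsAndCost_nonneg :
    IsClosed (marginalsAndCost C '' Set.Ici 0) := by
  refine isClosed_image_of_isBounded_inter_preimage
    (marginalsAndCost C).continuous_of_finiteDimensional isClosed_Ici fun t ht => ?_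
  obtain ⟨R, hR⟩ := isBounded_iff_forall_norm_le.mp ht
  exact isBounded_iff_forall_norm_le.mpr
    ⟨R, fun P ⟨hP, hPt⟩ => (norm_le_norm_marginalsAndCost C hP).trans (hR _ hPt)⟩

variable {C} {a : Fin Ma → ℝ} {b : Fin Mb → ℝ}

theorem exists_dualObjective_gt {r : ℝ} (hne : (transportPolytope a b).Nonempty)
    (hr : ∀ P ∈ transportPolytope a b, r < transportCost C P) :
    ∃ u v, (∀ i j, u i + v j ≤ C i j) ∧ r < dualObjective a b u v := by
  let K : ProperCone ℝ ((Fin Ma → ℝ) × (Fin Mb → ℝ) × ℝ) :=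
    ⟨(PointedCone.positive ℝ _).map (marginalsAndCost C),
      isClosed_image_marginalsAndCost_nonneg C⟩
  have hK : ∀ P : Fin Ma → Fin Mb → ℝ, 0 ≤ P → marginalsAndCost C P ∈ K :=
    fun P hP => ⟨P, hP, rfl⟩
  have habr : (a, b, r) ∉ K := by
    rintro ⟨P, hP, hPabr⟩
    replace hPabr : marginalsAndCost C P = (a, b, r) := hPabr
    simp only [marginalsAndCost_apply, Prod.mk.injEq] at hPabr
    exact (hr P ⟨hP, congrFun hPabr.1, congrFun hPabr.2.1⟩).ne hPabr.2.2.symm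
  obtain ⟨f, hfK, hf⟩ := K.hyperplane_separation_point habr
  set u := fun i => f (Pi.single i 1, 0, 0)
  set v := fun j => f (0, Pi.single j 1, 0)
  set c := f (0, 0, 1)
  have hfeas : ∀ i j, 0 ≤ u i + v j + C i j * c := fun i j => by
    have := hfK _ (hK (Pi.single i (Pi.single j 1))
      (Pi.single_nonneg.mpr (Pi.single_nonneg.mpr zero_le_one)))
    rw [marginalsAndCost_single, map_prod_eq_dualObjective_add f] at this
    simpa [dualObjective, Pi.single_apply] using this
  obtain ⟨P₀, hP₀⟩ := hne
  have hP₀K := hfK _ (hK P₀ hP₀.1)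
  have : marginalsAndCost C P₀ = (a, b, transportCost C P₀) :=
    Prod.ext (funext hP₀.2.1) (Prod.ext (funext hP₀.2.2) rfl)
  rw [this, map_prod_eq_dualObjective_add f] at hP₀K
  rw [map_prod_eq_dualObjective_add f] at hf
  have hc : 0 < c := by
    have : 0 < (transportCost C P₀ - r) * c := by linarith
    exact pos_of_mul_pos_right this (sub_pos.2 (hr P₀ hP₀)).le
  refine ⟨(-c⁻¹) • u, (-c⁻¹) • v, fun i j => ?_, ?_⟩
  · rw [Pi.smul_apply, Pi.smul_apply, smul_eq_mul, smul_eq_mul, ← mul_add, neg_mul, neg_le,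
      le_inv_mul_iff₀ hc]
    linarith [hfeas i j]
  · rw [dualObjective_smul, neg_mul, lt_neg, inv_mul_lt_iff₀ hc]
    linarith

end Farkas

/-- Strong linear-programming duality for optimal transport: for `(a,b) ∈ S`,
the minimum of the transport cost over the transport polytope is attained and
equals the maximum of `⟨a,u⟩ + ⟨b,v⟩` over the dual-feasible pairs `(u,v)`
(with `u_i + v_j ≤ C_{ij}` for all `i,j`), the latter being attained as well. -/
theorem transport_strong_duality (Ma Mb : ℕ) (hMa : 0 < Ma) (hMb : 0 < Mb)
    (C : Matrix (Fin Ma) (Fin Mb) ℝ)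
    (a : Fin Ma → ℝ) (b : Fin Mb → ℝ)
    (ha : ∀ i, 0 < a i) (hb : ∀ j, 0 < b j) (hab : ∑ i, a i = ∑ j, b j) :
    ∃ P ∈ transportPolytope a b, ∃ u : Fin Ma → ℝ, ∃ v : Fin Mb → ℝ,
      (∀ P' ∈ transportPolytope a b, transportCost C P ≤ transportCost C P') ∧
      (∀ i j, u i + v j ≤ C i j) ∧
      (∀ (u' : Fin Ma → ℝ) (v' : Fin Mb → ℝ), (∀ i j, u' i + v' j ≤ C i j) →
        ∑ i, a i * u' i + ∑ j, b j * v' j ≤ ∑ i, a i * u i + ∑ j, b j * v j) ∧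
      transportCost C P = ∑ i, a i * u i + ∑ j, b j * v j := by
  have : Nonempty (Fin Ma) := Fin.pos_iff_nonempty.mp hMa
  have : Nonempty (Fin Mb) := Fin.pos_iff_nonempty.mp hMb
  have ha₀ : 0 ≤ a := fun i => (ha i).le
  have hb₀ : 0 ≤ b := fun j => (hb j).le
  obtain ⟨P, hP, hPmin⟩ := (isCompact_transportPolytope a b).exists_isMinOn
    (transportPolytope_nonempty ha₀ hb₀ hab) (continuous_transportCost C).continuousOn
  obtain ⟨u, v, huv, hmax⟩ := exists_optimal_dual C ha₀ hb₀ hab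
  refine ⟨P, hP, u, v, fun P' hP' => hPmin hP', huv, hmax,
    le_antisymm ?_ (dualObjective_le_transportCost hP huv)⟩
  by_contra! hlt
  obtain ⟨u', v', huv', hgt⟩ :=
    exists_dualObjective_gt ⟨P, hP⟩ fun P' hP' => hlt.trans_le (hPmin hP')
  exact (hmax u' v' huv').not_gt hgt
end

section
/- Dual formula for the mass-N normalized Sinkhorn cost (saturated case of Corollary 1): let N > 0 and let (a,b) be a pair of positive vectors with ∑_i a_i = ∑_j b_j = N. Then min_{P ∈ P(a,b)} ⟨P, C⟩ + (1/λ)⟨P, log(P/N)⟩ equals the supremum over all (u,v) ∈ ℝ^{Ma}×ℝ^{Mb} of ⟨a,u⟩ + ⟨b,v⟩ − (N/λ) log ( ∑_{i,j} e^{−λ(C_{ij} − u_i − v_j)} ). -/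
open scoped BigOperators

/-- The mass-`N` normalized entropic transport cost
`⟨P,C⟩ + (1/λ)⟨P, log(P/N)⟩`.
(Note `Real.log 0 = 0` in Mathlib, so the convention `0 · log 0 = 0` holds.) -/
noncomputable def entTransportCostN {Ma Mb : ℕ} (C : Matrix (Fin Ma) (Fin Mb) ℝ)
    (lam N : ℝ) (P : Matrix (Fin Ma) (Fin Mb) ℝ) : ℝ :=
  (∑ i, ∑ j, P i j * C i j) + (1 / lam) * ∑ i, ∑ j, P i j * Real.log (P i j / N)

/-!
The dual function `D(u,v)` does not change when constants are added to `u` or `v`, and bounding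
its partition function below by a single term shows that its superlevel sets are bounded on the
slice `u i₀ = v j₀ = 0`; hence `D` attains its maximum. At a maximizer the gradient of `D` vanishes,
which says exactly that the Gibbs plan `N e^{-λ(C - u ⊕ v)} / Z` has marginals `a` and `b`. Its cost
equals `D(u,v)`, while the Gibbs variational inequality `∑ p f - N log ∑ e^f ≤ ∑ p log (p/N)`
gives `D ≤ cost` on the whole transport polytope.
-/

open Finset Real

section GibbsVariational

variable {ι : Type*} [Fintype ι]

theorem mul_le_mul_log_div_sub_add_mul_exp {p N : ℝ} (hp : 0 ≤ p) (hN : 0 < N) (y : ℝ) :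
    p * y ≤ p * log (p / N) - p + N * exp y := by
  rcases hp.eq_or_lt with rfl | hp
  · simp only [zero_mul, zero_div, log_zero, sub_zero, zero_add]
    positivity
  · have h := add_one_le_exp (y - log (p / N))
    rw [exp_sub, exp_log (by positivity), le_div_iff₀ (by positivity)] at h
    have h' : (y - log (p / N) + 1) * p ≤ N * exp y := by
      calc (y - log (p / N) + 1) * p = (y - log (p / N) + 1) * (p / N) * N := by field_simp
        _ ≤ exp y * N := mul_le_mul_of_nonneg_right h hN.le
        _ = N * exp y := mul_comm _ _
    linarith

theorem sum_mul_sub_mul_log_sum_exp_le [Nonempty ι] {p : ι → ℝ} {N : ℝ} (hp : ∀ k, 0 ≤ p k)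
    (hN : 0 < N) (hpN : ∑ k, p k = N) (f : ι → ℝ) :
    ∑ k, p k * f k - N * log (∑ k, exp (f k)) ≤ ∑ k, p k * log (p k / N) := by
  have hZ : 0 < ∑ k, exp (f k) := sum_pos (fun k _ => exp_pos _) univ_nonempty
  have h := sum_le_sum fun k (_ : k ∈ univ) =>
    mul_le_mul_log_div_sub_add_mul_exp (hp k) hN (f k - log (∑ k, exp (f k)))
  simp only [exp_sub, exp_log hZ, mul_sub, sum_sub_distrib, sum_add_distrib, ← mul_sum,
    ← sum_mul, ← sum_div, hpN, div_self hZ.ne'] at h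
  linarith

theorem sum_mul_log_div_eq_of_eq_gibbs [Nonempty ι] {p f : ι → ℝ} {N : ℝ} (hN : N ≠ 0)
    (hp : ∀ k, p k = N * exp (f k) / ∑ l, exp (f l)) :
    ∑ k, p k * log (p k / N) = ∑ k, p k * f k - N * log (∑ k, exp (f k)) := by
  have hZ : 0 < ∑ k, exp (f k) := sum_pos (fun k _ => exp_pos _) univ_nonempty
  have hpN : ∑ k, p k = N := by
    simp only [hp, ← sum_div, ← mul_sum]
    field_simp
  have hlog : ∀ k, log (p k / N) = f k - log (∑ k, exp (f k)) := fun k => by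
    rw [hp k, mul_div_assoc, mul_div_cancel_left₀ _ hN, log_div (exp_ne_zero _) hZ.ne', log_exp]
  simp only [hlog, mul_sub, sum_sub_distrib, ← sum_mul, hpN]

end GibbsVariational

section Sinkhorn

variable {Ma Mb : ℕ} (C : Matrix (Fin Ma) (Fin Mb) ℝ) (lam N : ℝ) (a : Fin Ma → ℝ) (b : Fin Mb → ℝ)

noncomputable def gibbsExponent (u : Fin Ma → ℝ) (v : Fin Mb → ℝ) (i : Fin Ma) (j : Fin Mb) : ℝ :=
  -(lam * (C i j - u i - v j))

noncomputable def sinkhornPartition (u : Fin Ma → ℝ) (v : Fin Mb → ℝ) : ℝ :=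
  ∑ i, ∑ j, exp (gibbsExponent C lam u v i j)

noncomputable def sinkhornDual (u : Fin Ma → ℝ) (v : Fin Mb → ℝ) : ℝ :=
  ∑ i, a i * u i + ∑ j, b j * v j - (N / lam) * log (sinkhornPartition C lam u v)

noncomputable def gibbsPlan (u : Fin Ma → ℝ) (v : Fin Mb → ℝ) : Matrix (Fin Ma) (Fin Mb) ℝ :=
  fun i j => N * exp (gibbsExponent C lam u v i j) / sinkhornPartition C lam u v

variable {C lam N a b}

theorem sinkhornPartition_pos [Nonempty (Fin Ma)] [Nonempty (Fin Mb)] (u : Fin Ma → ℝ)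
    (v : Fin Mb → ℝ) : 0 < sinkhornPartition C lam u v :=
  sum_pos (fun _ _ => sum_pos (fun _ _ => exp_pos _) univ_nonempty) univ_nonempty

theorem sum_sum_mul_gibbsExponent {P : Matrix (Fin Ma) (Fin Mb) ℝ}
    (hrow : ∀ i, ∑ j, P i j = a i) (hcol : ∀ j, ∑ i, P i j = b j) (u : Fin Ma → ℝ)
    (v : Fin Mb → ℝ) :
    ∑ i, ∑ j, P i j * gibbsExponent C lam u v i j
      = lam * (∑ i, a i * u i + ∑ j, b j * v j - ∑ i, ∑ j, P i j * C i j) := by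
  have hu : ∑ i, ∑ j, P i j * u i = ∑ i, a i * u i := by simp only [← sum_mul, hrow]
  have hv : ∑ i, ∑ j, P i j * v j = ∑ j, b j * v j := by
    rw [sum_comm]; simp only [← sum_mul, hcol]
  rw [← hu, ← hv]
  simp only [gibbsExponent, mul_sum, ← sum_add_distrib, ← sum_sub_distrib]
  refine sum_congr rfl fun i _ => sum_congr rfl fun j _ => ?_
  ring

theorem entTransportCostN_sub_sinkhornDual (hlam : lam ≠ 0) {P : Matrix (Fin Ma) (Fin Mb) ℝ}
    (hrow : ∀ i, ∑ j, P i j = a i) (hcol : ∀ j, ∑ i, P i j = b j) (u : Fin Ma → ℝ)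
    (v : Fin Mb → ℝ) :
    entTransportCostN C lam N P - sinkhornDual C lam N a b u v
      = (∑ i, ∑ j, P i j * log (P i j / N)
          - (∑ i, ∑ j, P i j * gibbsExponent C lam u v i j
              - N * log (sinkhornPartition C lam u v))) / lam := by
  rw [sum_sum_mul_gibbsExponent hrow hcol, entTransportCostN, sinkhornDual]
  field_simp
  ring

theorem sinkhornDual_le_entTransportCostN [Nonempty (Fin Ma)] [Nonempty (Fin Mb)]
    (hlam : 0 < lam) (hN : 0 < N) (haN : ∑ i, a i = N) {P : Matrix (Fin Ma) (Fin Mb) ℝ}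
    (hP : P ∈ transportPolytope a b) (u : Fin Ma → ℝ) (v : Fin Mb → ℝ) :
    sinkhornDual C lam N a b u v ≤ entTransportCostN C lam N P := by
  obtain ⟨hnonneg, hrow, hcol⟩ := hP
  have hmass : ∑ x : Fin Ma × Fin Mb, P x.1 x.2 = N := by
    rw [Fintype.sum_prod_type, ← haN]; exact sum_congr rfl fun i _ => hrow i
  have h := sum_mul_sub_mul_log_sum_exp_le (fun x : Fin Ma × Fin Mb => hnonneg x.1 x.2) hN hmass
    fun x => gibbsExponent C lam u v x.1 x.2
  simp only [Fintype.sum_prod_type] at h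
  rw [← sub_nonneg, entTransportCostN_sub_sinkhornDual hlam.ne' hrow hcol]
  exact div_nonneg (sub_nonneg.2 h) hlam.le

theorem entTransportCostN_gibbsPlan [Nonempty (Fin Ma)] [Nonempty (Fin Mb)] (hlam : lam ≠ 0)
    (hN : N ≠ 0) {u : Fin Ma → ℝ} {v : Fin Mb → ℝ}
    (hrow : ∀ i, ∑ j, gibbsPlan C lam N u v i j = a i)
    (hcol : ∀ j, ∑ i, gibbsPlan C lam N u v i j = b j) :
    entTransportCostN C lam N (gibbsPlan C lam N u v) = sinkhornDual C lam N a b u v := by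
  have h := sum_mul_log_div_eq_of_eq_gibbs (ι := Fin Ma × Fin Mb)
    (p := fun x => gibbsPlan C lam N u v x.1 x.2) (f := fun x => gibbsExponent C lam u v x.1 x.2)
    hN fun x => by
      simp only [gibbsPlan, sinkhornPartition, Fintype.sum_prod_type]
  simp only [Fintype.sum_prod_type] at h
  rw [← sub_eq_zero, entTransportCostN_sub_sinkhornDual hlam hrow hcol, h, sinkhornPartition,
    sub_self, zero_div]

theorem sinkhornDual_add_const [Nonempty (Fin Ma)] [Nonempty (Fin Mb)] (hlam : lam ≠ 0)
    (haN : ∑ i, a i = N) (hbN : ∑ j, b j = N) (u : Fin Ma → ℝ) (v : Fin Mb → ℝ) (s t : ℝ) :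
    sinkhornDual C lam N a b (fun i => u i + s) (fun j => v j + t)
      = sinkhornDual C lam N a b u v := by
  have hZ : sinkhornPartition C lam (fun i => u i + s) (fun j => v j + t)
      = exp (lam * (s + t)) * sinkhornPartition C lam u v := by
    simp only [sinkhornPartition, mul_sum, ← exp_add, gibbsExponent]
    refine sum_congr rfl fun i _ => sum_congr rfl fun j _ => ?_
    ring_nf
  rw [sinkhornDual, sinkhornDual, hZ, log_mul (exp_ne_zero _) (sinkhornPartition_pos u v).ne',
    log_exp]
  simp only [mul_add, sum_add_distrib, ← sum_mul, haN, hbN]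
  field_simp
  ring

theorem sinkhornDual_le_mul_sub_sum_sub_sum (hlam : 0 < lam) (hN : 0 ≤ N) (haN : ∑ i, a i = N)
    (hbN : ∑ j, b j = N) (u : Fin Ma → ℝ) (v : Fin Mb → ℝ) (i : Fin Ma) (j : Fin Mb) :
    sinkhornDual C lam N a b u v
      ≤ N * C i j - ∑ k, a k * (u i - u k) - ∑ l, b l * (v j - v l) := by
  have hterm : exp (gibbsExponent C lam u v i j) ≤ sinkhornPartition C lam u v :=
    (single_le_sum (f := fun j => exp (gibbsExponent C lam u v i j)) (fun _ _ => (exp_pos _).le)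
      (mem_univ j)).trans
      (single_le_sum (f := fun i => ∑ j, exp (gibbsExponent C lam u v i j))
        (fun _ _ => sum_nonneg fun _ _ => (exp_pos _).le) (mem_univ i))
  have hlog : gibbsExponent C lam u v i j ≤ log (sinkhornPartition C lam u v) :=
    (le_log_iff_exp_le ((exp_pos _).trans_le hterm)).2 hterm
  have hscaled := mul_le_mul_of_nonneg_left hlog (div_nonneg hN hlam.le)
  have hexp : N / lam * gibbsExponent C lam u v i j = -(N * (C i j - u i - v j)) := by
    rw [gibbsExponent]; field_simp
  simp only [mul_sub, sum_sub_distrib, ← sum_mul, haN, hbN]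
  rw [sinkhornDual]
  linarith

theorem mem_Icc_of_sum_mul_sub_le {ι : Type*} [Fintype ι] {w x : ι → ℝ} {i₀ i : ι} {R : ℝ}
    (hw : ∀ k, 0 < w k) (hi : ∀ k, x k ≤ x i) (h₀ : x i₀ = 0)
    (hR : ∑ k, w k * (x i - x k) ≤ R) (k : ι) : x k ∈ Set.Icc (-R / w k) (R / w i₀) := by
  have hgap : ∀ k, x i - x k ≤ R / w k := fun k => by
    rw [le_div_iff₀ (hw k), mul_comm]
    exact (single_le_sum (fun l _ => mul_nonneg (hw l).le (sub_nonneg.2 (hi l)))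
      (mem_univ k)).trans hR
  rw [Set.mem_Icc, neg_div]
  constructor <;> linarith [hgap i₀, hgap k, hi i₀, hi k]

theorem continuous_sinkhornDual [Nonempty (Fin Ma)] [Nonempty (Fin Mb)] :
    Continuous fun p : (Fin Ma → ℝ) × (Fin Mb → ℝ) => sinkhornDual C lam N a b p.1 p.2 := by
  have hZ : Continuous fun p : (Fin Ma → ℝ) × (Fin Mb → ℝ) => sinkhornPartition C lam p.1 p.2 := by
    unfold sinkhornPartition gibbsExponent
    fun_prop
  have hlogZ := hZ.log fun p => (sinkhornPartition_pos p.1 p.2).ne'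
  unfold sinkhornDual
  fun_prop

theorem sinkhornDual_exists_forall_ge [Nonempty (Fin Ma)] [Nonempty (Fin Mb)] (hlam : 0 < lam)
    (hN : 0 ≤ N) (ha : ∀ i, 0 < a i) (hb : ∀ j, 0 < b j) (haN : ∑ i, a i = N)
    (hbN : ∑ j, b j = N) :
    ∃ u v, ∀ u' v', sinkhornDual C lam N a b u' v' ≤ sinkhornDual C lam N a b u v := by
  obtain ⟨i₀⟩ := ‹Nonempty (Fin Ma)›
  obtain ⟨j₀⟩ := ‹Nonempty (Fin Mb)›
  obtain ⟨⟨i₁, j₁⟩, hC⟩ := Finite.exists_max fun x : Fin Ma × Fin Mb => C x.1 x.2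
  set D₀ := sinkhornDual C lam N a b 0 0
  set R := N * C i₁ j₁ - D₀
  set S := {p : (Fin Ma → ℝ) × (Fin Mb → ℝ) |
    p.1 i₀ = 0 ∧ p.2 j₀ = 0 ∧ D₀ ≤ sinkhornDual C lam N a b p.1 p.2}
  have hS_closed : IsClosed S :=
    (isClosed_eq ((continuous_apply i₀).comp continuous_fst) continuous_const).inter
      ((isClosed_eq ((continuous_apply j₀).comp continuous_snd) continuous_const).inter
        (isClosed_le continuous_const continuous_sinkhornDual))
  have hS_box : S ⊆ (Set.univ.pi fun i => Set.Icc (-R / a i) (R / a i₀)) ×ˢ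
      (Set.univ.pi fun j => Set.Icc (-R / b j) (R / b j₀)) := by
    rintro ⟨u, v⟩ ⟨hu₀, hv₀, hD⟩
    obtain ⟨i, hi⟩ := Finite.exists_max u
    obtain ⟨j, hj⟩ := Finite.exists_max v
    have hbound := sinkhornDual_le_mul_sub_sum_sub_sum (C := C) hlam hN haN hbN u v i j
    have hu := sum_nonneg fun k (_ : k ∈ univ) => mul_nonneg (ha k).le (sub_nonneg.2 (hi k))
    have hv := sum_nonneg fun l (_ : l ∈ univ) => mul_nonneg (hb l).le (sub_nonneg.2 (hj l))
    have hCij := mul_le_mul_of_nonneg_left (hC (i, j)) hN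
    exact ⟨fun k _ => mem_Icc_of_sum_mul_sub_le ha hi hu₀ (by linarith) k,
      fun l _ => mem_Icc_of_sum_mul_sub_le hb hj hv₀ (by linarith) l⟩
  have hS_compact : IsCompact S :=
    ((isCompact_univ_pi fun _ => isCompact_Icc).prod
      (isCompact_univ_pi fun _ => isCompact_Icc)).of_isClosed_subset hS_closed hS_box
  have h₀ : ((0 : Fin Ma → ℝ), (0 : Fin Mb → ℝ)) ∈ S := ⟨rfl, rfl, le_rfl⟩
  obtain ⟨p, -, hmax⟩ := hS_compact.exists_isMaxOn ⟨_, h₀⟩ continuous_sinkhornDual.continuousOn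
  refine ⟨p.1, p.2, fun u v => ?_⟩
  have hshift := sinkhornDual_add_const (C := C) hlam.ne' haN hbN u v (-u i₀) (-v j₀)
  by_cases hD : D₀ ≤ sinkhornDual C lam N a b u v
  · rw [← hshift]
    exact hmax (show (_, _) ∈ S from ⟨add_neg_cancel _, add_neg_cancel _, hshift ▸ hD⟩)
  · exact (not_le.1 hD).le.trans (hmax h₀)

theorem hasDerivAt_sinkhornDual_line [Nonempty (Fin Ma)] [Nonempty (Fin Mb)] (hlam : lam ≠ 0)
    (u du : Fin Ma → ℝ) (v dv : Fin Mb → ℝ) :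
    HasDerivAt (fun t : ℝ => sinkhornDual C lam N a b (u + t • du) (v + t • dv))
      (∑ i, (a i - ∑ j, gibbsPlan C lam N u v i j) * du i
        + ∑ j, (b j - ∑ i, gibbsPlan C lam N u v i j) * dv j) 0 := by
  set g := gibbsExponent C lam u v
  set Z := sinkhornPartition C lam u v
  have hg : ∀ (t : ℝ) (i : Fin Ma) (j : Fin Mb),
      gibbsExponent C lam (u + t • du) (v + t • dv) i j = g i j + t * (lam * (du i + dv j)) :=
      fun t i j => by
    simp only [g, gibbsExponent, Pi.add_apply, Pi.smul_apply, smul_eq_mul]; ring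
  have hZ : HasDerivAt (fun t : ℝ => sinkhornPartition C lam (u + t • du) (v + t • dv))
      (∑ i, ∑ j, exp (g i j) * (lam * (du i + dv j))) 0 := by
    simp only [sinkhornPartition, hg]
    refine HasDerivAt.fun_sum fun i _ => HasDerivAt.fun_sum fun j _ => ?_
    simpa using (((hasDerivAt_id (0 : ℝ)).mul_const (lam * (du i + dv j))).const_add (g i j)).exp
  have hlin : HasDerivAt (fun t : ℝ => ∑ i, a i * (u + t • du) i + ∑ j, b j * (v + t • dv) j)
      (∑ i, a i * du i + ∑ j, b j * dv j) 0 := by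
    refine (HasDerivAt.fun_sum fun i _ => ?_).add (HasDerivAt.fun_sum fun j _ => ?_) <;>
      simpa using (((hasDerivAt_id (0 : ℝ)).mul_const _).const_add _).const_mul _
  have hlog := (hZ.log (sinkhornPartition_pos _ _).ne').const_mul (N / lam)
  simp only [zero_smul, add_zero] at hlog
  have hgrad : N / lam * ((∑ i, ∑ j, exp (g i j) * (lam * (du i + dv j))) / Z)
      = ∑ i, ∑ j, gibbsPlan C lam N u v i j * du i
        + ∑ i, ∑ j, gibbsPlan C lam N u v i j * dv j := by
    rw [← sum_add_distrib, mul_div_assoc', mul_sum, sum_div]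
    refine sum_congr rfl fun i _ => ?_
    rw [mul_sum, sum_div, ← sum_add_distrib]
    refine sum_congr rfl fun j _ => ?_
    simp only [gibbsPlan, g, Z]
    field_simp
  refine (hlin.sub hlog).congr_deriv ?_
  simp only [sub_mul, sum_sub_distrib, sum_mul]
  rw [sum_comm (f := fun j i => gibbsPlan C lam N u v i j * dv j)]
  linarith [hgrad]

theorem gibbsPlan_mem_transportPolytope [Nonempty (Fin Ma)] [Nonempty (Fin Mb)] (hlam : lam ≠ 0)
    (hN : 0 ≤ N) {u : Fin Ma → ℝ} {v : Fin Mb → ℝ}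
    (hmax : ∀ u' v', sinkhornDual C lam N a b u' v' ≤ sinkhornDual C lam N a b u v) :
    gibbsPlan C lam N u v ∈ transportPolytope a b := by
  have hcrit : ∀ (du : Fin Ma → ℝ) (dv : Fin Mb → ℝ),
      ∑ i, (a i - ∑ j, gibbsPlan C lam N u v i j) * du i
        + ∑ j, (b j - ∑ i, gibbsPlan C lam N u v i j) * dv j = 0 := fun du dv =>
    IsLocalMax.hasDerivAt_eq_zero
      (f := fun t : ℝ => sinkhornDual C lam N a b (u + t • du) (v + t • dv))
      (Filter.Eventually.of_forall fun t => by simpa using hmax _ _)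
      (hasDerivAt_sinkhornDual_line hlam u du v dv)
  refine ⟨fun i j => div_nonneg (mul_nonneg hN (exp_pos _).le) (sinkhornPartition_pos u v).le,
    fun i => ?_, fun j => ?_⟩
  · exact (sub_eq_zero.1 (by simpa [Pi.single_apply] using hcrit (Pi.single i 1) 0)).symm
  · exact (sub_eq_zero.1 (by simpa [Pi.single_apply] using hcrit 0 (Pi.single j 1))).symm

end Sinkhorn

/-- Dual formula for the mass-`N` normalized Sinkhorn cost (saturated case of
Corollary 1): if `a, b > 0` and `∑ a = ∑ b = N`, then
`min_{P ∈ P(a,b)} ⟨P,C⟩ + (1/λ)⟨P, log(P/N)⟩` equals the supremum over `(u,v)`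
of `⟨a,u⟩ + ⟨b,v⟩ − (N/λ) log(∑_{i,j} e^{−λ(C_{ij} − u_i − v_j)})`. -/
theorem normalized_sinkhorn_duality (Ma Mb : ℕ) (hMa : 0 < Ma) (hMb : 0 < Mb)
    (C : Matrix (Fin Ma) (Fin Mb) ℝ) (lam N : ℝ) (hlam : 0 < lam) (hN : 0 < N)
    (a : Fin Ma → ℝ) (b : Fin Mb → ℝ)
    (ha : ∀ i, 0 < a i) (hb : ∀ j, 0 < b j)
    (haN : ∑ i, a i = N) (hbN : ∑ j, b j = N) :
    sInf (entTransportCostN C lam N '' transportPolytope a b)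
      = sSup {x : ℝ | ∃ (u : Fin Ma → ℝ) (v : Fin Mb → ℝ),
          x = ∑ i, a i * u i + ∑ j, b j * v j
            - (N / lam) * Real.log (∑ i, ∑ j, Real.exp (-(lam * (C i j - u i - v j))))} := by
  have : Nonempty (Fin Ma) := Fin.pos_iff_nonempty.mp hMa
  have : Nonempty (Fin Mb) := Fin.pos_iff_nonempty.mp hMb
  obtain ⟨u, v, hmax⟩ := sinkhornDual_exists_forall_ge (C := C) hlam hN.le ha hb haN hbN
  have hG := gibbsPlan_mem_transportPolytope hlam.ne' hN.le hmax
  have hcost := entTransportCostN_gibbsPlan hlam.ne' hN.ne' hG.2.1 hG.2.2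
  have hleast : IsLeast (entTransportCostN C lam N '' transportPolytope a b)
      (sinkhornDual C lam N a b u v) :=
    ⟨⟨_, hG, hcost⟩, by
      rintro _ ⟨P, hP, rfl⟩
      exact sinkhornDual_le_entTransportCostN hlam hN haN hP u v⟩
  have hgreatest : IsGreatest {x | ∃ u' v', x = sinkhornDual C lam N a b u' v'}
      (sinkhornDual C lam N a b u v) :=
    ⟨⟨u, v, rfl⟩, by
      rintro _ ⟨u', v', rfl⟩
      exact hmax u' v'⟩
  exact hleast.csInf_eq.trans hgreatest.csSup_eq.symm
end

section
/- (Corollary 1) Conjugate of the normalized Sinkhorn distance on histograms of mass at most N: for every (u,v) ∈ ℝ^{Ma}×ℝ^{Mb}, let Q(u,v) ∈ ℝ^{Ma×Mb} have entries Q_{ij} = e^{λ(u_i + v_j − C_{ij}) − 1} and set s = ∑_{i,j} Q_{ij}. Then the supremum over (a,b) ∈ S_{≤N} of ⟨a,u⟩ + ⟨b,v⟩ − MK_{λ,≤N}(a,b) equals (N/λ)·s when s ≤ 1, and equals (N/λ)·log s + N/λ when s ≥ 1. -/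
open scoped BigOperators

/-- The integrand of the normalized Sinkhorn distance:
`⟨P,C⟩ + (1/λ)⟨P, log P⟩ − (log N / λ)⟨P, 1⟩`.
(Note `Real.log 0 = 0` in Mathlib, so the convention `0 · log 0 = 0` holds.) -/
noncomputable def normalizedEntCost {Ma Mb : ℕ} (C : Matrix (Fin Ma) (Fin Mb) ℝ)
    (lam N : ℝ) (P : Matrix (Fin Ma) (Fin Mb) ℝ) : ℝ :=
  (∑ i, ∑ j, P i j * C i j) + (1 / lam) * (∑ i, ∑ j, P i j * Real.log (P i j))
    - (Real.log N / lam) * (∑ i, ∑ j, P i j)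

/-- The normalized Sinkhorn distance `MK_{λ,≤N}(a,b)` (as a minimum over the
transport polytope). -/
noncomputable def MKlamN {Ma Mb : ℕ} (C : Matrix (Fin Ma) (Fin Mb) ℝ) (lam N : ℝ)
    (a : Fin Ma → ℝ) (b : Fin Mb → ℝ) : ℝ :=
  sInf (normalizedEntCost C lam N '' transportPolytope a b)


lemma mul_log_lb (p q : ℝ) (hp : 0 ≤ p) (hq : 0 < q) :
    p * Real.log q + p - q ≤ p * Real.log p := by
  rcases hp.eq_or_lt with h | h
  · simp [← h]; linarith
  · have h1 := Real.log_le_sub_one_of_pos (show (0:ℝ) < q / p by positivity)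
    have h2 : Real.log (q / p) = Real.log q - Real.log p :=
      Real.log_div hq.ne' h.ne'
    have h3 : p * (q / p - 1) = q - p := by field_simp
    nlinarith

lemma entry_bound (lam t c p N : ℝ) (hlam : 0 < lam) (hc : 0 < c) (hp : 0 ≤ p) :
    p * t - (1 / lam) * (p * Real.log p) + (Real.log N / lam) * p
      ≤ (1 / lam) * (p * (Real.log N - Real.log c) + c * Real.exp (lam * t - 1)) := by
  set q := c * Real.exp (lam * t - 1) with hqdef
  have hq : 0 < q := by positivity
  have hlogq : Real.log q = Real.log c + (lam * t - 1) := by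
    rw [hqdef, Real.log_mul hc.ne' (Real.exp_pos _).ne', Real.log_exp]
  have h1 := mul_log_lb p q hp hq
  rw [hlogq] at h1
  rw [← sub_nonneg]
  have e : (1 / lam) * (p * (Real.log N - Real.log c) + q)
      - (p * t - (1 / lam) * (p * Real.log p) + (Real.log N / lam) * p)
      = (1 / lam) * ((p * Real.log p) - (p * (Real.log c + (lam * t - 1)) + p - q)) := by
    field_simp
    ring
  rw [e]
  have : 0 ≤ (p * Real.log p) - (p * (Real.log c + (lam * t - 1)) + p - q) := by linarith
  positivity

lemma entry_eq (lam t c N : ℝ) (hlam : 0 < lam) (hc : 0 < c) :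
    (c * Real.exp (lam * t - 1)) * t
      - (1 / lam) * ((c * Real.exp (lam * t - 1)) * Real.log (c * Real.exp (lam * t - 1)))
      + (Real.log N / lam) * (c * Real.exp (lam * t - 1))
      = (1 / lam) * ((c * Real.exp (lam * t - 1)) * (Real.log N - Real.log c)
          + c * Real.exp (lam * t - 1)) := by
  have hlogq : Real.log (c * Real.exp (lam * t - 1)) = Real.log c + (lam * t - 1) := by
    rw [Real.log_mul hc.ne' (Real.exp_pos _).ne', Real.log_exp]
  rw [hlogq]
  field_simp
  ring

lemma G_eq {Ma Mb : ℕ} (C : Matrix (Fin Ma) (Fin Mb) ℝ) (lam N : ℝ)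
    (u : Fin Ma → ℝ) (v : Fin Mb → ℝ) (P : Matrix (Fin Ma) (Fin Mb) ℝ) :
    (∑ i, ∑ j, P i j * (u i + v j)) - normalizedEntCost C lam N P
      = ∑ i, ∑ j, (P i j * (u i + v j - C i j)
          - (1 / lam) * (P i j * Real.log (P i j)) + (Real.log N / lam) * P i j) := by
  unfold normalizedEntCost
  simp only [Finset.mul_sum, ← Finset.sum_add_distrib, ← Finset.sum_sub_distrib]
  congr 1; ext i; congr 1; ext j; ring

lemma marginal_identity {Ma Mb : ℕ} (P : Matrix (Fin Ma) (Fin Mb) ℝ)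
    (u : Fin Ma → ℝ) (v : Fin Mb → ℝ) (a : Fin Ma → ℝ) (b : Fin Mb → ℝ)
    (ha : ∀ i, ∑ j, P i j = a i) (hb : ∀ j, ∑ i, P i j = b j) :
    ∑ i, ∑ j, P i j * (u i + v j) = ∑ i, a i * u i + ∑ j, b j * v j := by
  have : ∀ i, ∑ j, P i j * (u i + v j) = (∑ j, P i j) * u i + ∑ j, P i j * v j := by
    intro i
    rw [Finset.sum_mul, ← Finset.sum_add_distrib]
    congr 1; ext j; ring
  simp_rw [this, Finset.sum_add_distrib, ha]
  congr 1
  rw [Finset.sum_comm]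
  congr 1; ext j
  rw [← Finset.sum_mul, hb]

lemma polytope_nonempty {Ma Mb : ℕ} (hMa : 0 < Ma)
    (a : Fin Ma → ℝ) (b : Fin Mb → ℝ) (ha : ∀ i, 0 < a i) (hb : ∀ j, 0 < b j)
    (hab : ∑ i, a i = ∑ j, b j) :
    (transportPolytope a b).Nonempty := by
  have : Nonempty (Fin Ma) := ⟨⟨0, hMa⟩⟩
  have hT : 0 < ∑ j, b j := by
    rw [← hab]
    exact Finset.sum_pos (fun i _ => ha i) Finset.univ_nonempty
  refine ⟨fun i j => a i * b j / (∑ j, b j), fun i j => ?_, fun i => ?_, fun j => ?_⟩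
  · have := (ha i).le; have := (hb j).le; positivity
  · rw [← Finset.sum_div, ← Finset.mul_sum, mul_div_assoc, div_self hT.ne', mul_one]
  · simp only
    rw [← Finset.sum_div, ← Finset.sum_mul, hab]
    field_simp

/-- Upper bound: for any nonnegative `P`,
`⟨P, u⊕v⟩ − F(P) ≤ (1/λ)((log N − log c)·mass(P) + c·s)`. -/
lemma sum_bound {Ma Mb : ℕ} (C : Matrix (Fin Ma) (Fin Mb) ℝ) (lam N c : ℝ)
    (u : Fin Ma → ℝ) (v : Fin Mb → ℝ) (hlam : 0 < lam) (hc : 0 < c)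
    (P : Matrix (Fin Ma) (Fin Mb) ℝ) (hP : ∀ i j, 0 ≤ P i j) :
    (∑ i, ∑ j, P i j * (u i + v j)) - normalizedEntCost C lam N P
      ≤ (1 / lam) * ((Real.log N - Real.log c) * (∑ i, ∑ j, P i j)
          + c * (∑ i, ∑ j, Real.exp (lam * (u i + v j - C i j) - 1))) := by
  rw [G_eq]
  have hb : ∀ i j, P i j * (u i + v j - C i j)
      - (1 / lam) * (P i j * Real.log (P i j)) + (Real.log N / lam) * P i j
      ≤ (1 / lam) * (P i j * (Real.log N - Real.log c)
          + c * Real.exp (lam * (u i + v j - C i j) - 1)) :=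
    fun i j => entry_bound lam (u i + v j - C i j) c (P i j) N hlam hc (hP i j)
  calc ∑ i, ∑ j, (P i j * (u i + v j - C i j)
          - (1 / lam) * (P i j * Real.log (P i j)) + (Real.log N / lam) * P i j)
      ≤ ∑ i, ∑ j, (1 / lam) * (P i j * (Real.log N - Real.log c)
          + c * Real.exp (lam * (u i + v j - C i j) - 1)) :=
        Finset.sum_le_sum (fun i _ => Finset.sum_le_sum (fun j _ => hb i j))
    _ = (1 / lam) * ((Real.log N - Real.log c) * (∑ i, ∑ j, P i j)
          + c * (∑ i, ∑ j, Real.exp (lam * (u i + v j - C i j) - 1))) := by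
        simp only [Finset.mul_sum, ← Finset.sum_add_distrib]
        congr 1; ext i; congr 1; ext j; ring

/-- The auxiliary `IsGreatest` statement, parametrized by the scaling `c`. -/
lemma isGreatest_aux (Ma Mb : ℕ) (hMa : 0 < Ma) (hMb : 0 < Mb)
    (C : Matrix (Fin Ma) (Fin Mb) ℝ) (lam N : ℝ) (hlam : 0 < lam) (hN : 0 < N)
    (u : Fin Ma → ℝ) (v : Fin Mb → ℝ) (c : ℝ) (hc : 0 < c)
    (s : ℝ) (hs : s = ∑ i, ∑ j, Real.exp (lam * (u i + v j - C i j) - 1))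
    (hcsN : c * s ≤ N) (hlogc : Real.log c ≤ Real.log N)
    (hmass : (Real.log N - Real.log c) * N = (Real.log N - Real.log c) * (c * s)) :
    IsGreatest {x : ℝ | ∃ (a : Fin Ma → ℝ) (b : Fin Mb → ℝ),
          (∀ i, 0 < a i) ∧ (∀ j, 0 < b j) ∧ (∑ i, a i = ∑ j, b j) ∧ (∑ i, a i ≤ N) ∧
          x = ∑ i, a i * u i + ∑ j, b j * v j - MKlamN C lam N a b}
      ((1 / lam) * ((Real.log N - Real.log c) * (c * s) + c * s)) := by
  have hia : Nonempty (Fin Ma) := ⟨⟨0, hMa⟩⟩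
  have hib : Nonempty (Fin Mb) := ⟨⟨0, hMb⟩⟩
  set V : ℝ := (1 / lam) * ((Real.log N - Real.log c) * (c * s) + c * s) with hV
  -- the optimal plan
  set Q : Matrix (Fin Ma) (Fin Mb) ℝ :=
    fun i j => c * Real.exp (lam * (u i + v j - C i j) - 1) with hQ
  have hQpos : ∀ i j, 0 < Q i j := fun i j => by positivity
  set a : Fin Ma → ℝ := fun i => ∑ j, Q i j with haQ
  set b : Fin Mb → ℝ := fun j => ∑ i, Q i j with hbQ
  have hQmass : ∑ i, ∑ j, Q i j = c * s := by
    rw [hs, Finset.mul_sum]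
    congr 1; ext i; rw [Finset.mul_sum]
  have hasum : ∑ i, a i = c * s := hQmass
  have hbsum : ∑ j, b j = c * s := by
    rw [← hQmass, Finset.sum_comm]
  have hQmem : Q ∈ transportPolytope a b :=
    ⟨fun i j => (hQpos i j).le, fun i => rfl, fun j => rfl⟩
  -- value of G at Q
  have hGQ : (∑ i, ∑ j, Q i j * (u i + v j)) - normalizedEntCost C lam N Q = V := by
    rw [G_eq]
    have : ∀ i j, Q i j * (u i + v j - C i j)
        - (1 / lam) * (Q i j * Real.log (Q i j)) + (Real.log N / lam) * Q i j
        = (1 / lam) * (Q i j * (Real.log N - Real.log c) + Q i j) :=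
      fun i j => entry_eq lam (u i + v j - C i j) c N hlam hc
    simp_rw [this]
    rw [hV, ← hQmass]
    simp only [Finset.mul_sum, ← Finset.sum_add_distrib]
    congr 1; ext i; congr 1; ext j; ring
  -- MK at (a,b) equals F(Q)
  have hMK : MKlamN C lam N a b = normalizedEntCost C lam N Q := by
    unfold MKlamN
    have hlow : ∀ P ∈ transportPolytope a b,
        normalizedEntCost C lam N Q ≤ normalizedEntCost C lam N P := by
      intro P hP
      obtain ⟨hPnn, hPa, hPb⟩ := hP
      have hPmass : ∑ i, ∑ j, P i j = c * s := by
        rw [← hasum]; exact Finset.sum_congr rfl (fun i _ => hPa i)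
      have h1 := sum_bound C lam N c u v hlam hc P hPnn
      rw [hPmass, ← hs] at h1
      have h2 : (∑ i, ∑ j, P i j * (u i + v j))
          = ∑ i, ∑ j, Q i j * (u i + v j) := by
        rw [marginal_identity P u v a b hPa hPb,
          marginal_identity Q u v a b (fun i => rfl) (fun j => rfl)]
      rw [h2] at h1
      linarith [hGQ, h1]
    apply le_antisymm
    · exact csInf_le ⟨normalizedEntCost C lam N Q, by
        rintro y ⟨P, hP, rfl⟩; exact hlow P hP⟩ (Set.mem_image_of_mem _ hQmem)
    · apply le_csInf (Set.Nonempty.image _ ⟨Q, hQmem⟩)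
      rintro y ⟨P, hP, rfl⟩
      exact hlow P hP
  constructor
  · -- membership
    refine ⟨a, b, fun i => Finset.sum_pos (fun j _ => hQpos i j) Finset.univ_nonempty,
      fun j => Finset.sum_pos (fun i _ => hQpos i j) Finset.univ_nonempty,
      by rw [hasum, hbsum], by rw [hasum]; exact hcsN, ?_⟩
    rw [hMK, ← marginal_identity Q u v a b (fun i => rfl) (fun j => rfl), hGQ]
  · -- upper bound
    rintro x ⟨a', b', ha', hb', hab', hleN, rfl⟩
    have hmem := polytope_nonempty hMa a' b' ha' hb' hab'
    have hlb : ∀ P ∈ transportPolytope a' b',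
        (∑ i, a' i * u i + ∑ j, b' j * v j) - V ≤ normalizedEntCost C lam N P := by
      intro P hP
      obtain ⟨hPnn, hPa, hPb⟩ := hP
      have h1 := sum_bound C lam N c u v hlam hc P hPnn
      rw [← hs, marginal_identity P u v a' b' hPa hPb] at h1
      have hPmass : ∑ i, ∑ j, P i j = ∑ i, a' i :=
        Finset.sum_congr rfl (fun i _ => hPa i)
      have h3 : (Real.log N - Real.log c) * (∑ i, ∑ j, P i j)
          ≤ (Real.log N - Real.log c) * (c * s) := by
        rw [← hmass, hPmass]
        exact mul_le_mul_of_nonneg_left hleN (by linarith)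
      have h4 : (1 / lam) * ((Real.log N - Real.log c) * (∑ i, ∑ j, P i j) + c * s)
          ≤ V := by
        rw [hV]
        apply mul_le_mul_of_nonneg_left _ (by positivity)
        linarith
      linarith
    have : (∑ i, a' i * u i + ∑ j, b' j * v j) - V ≤ MKlamN C lam N a' b' := by
      apply le_csInf (Set.Nonempty.image _ hmem)
      rintro y ⟨P, hP, rfl⟩
      exact hlb P hP
    linarith

/-- (Corollary 1) Conjugate of the normalized Sinkhorn distance on histograms of
mass at most `N`: with `Q_{ij} = e^{λ(u_i + v_j − C_{ij}) − 1}` and `s = ∑ Q_{ij}`,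
the supremum over `(a,b) ∈ S_{≤N}` of `⟨a,u⟩ + ⟨b,v⟩ − MK_{λ,≤N}(a,b)` equals
`(N/λ)·s` when `s ≤ 1`, and `(N/λ)·log s + N/λ` when `s ≥ 1`. -/
theorem normalized_sinkhorn_conjugate (Ma Mb : ℕ) (hMa : 0 < Ma) (hMb : 0 < Mb)
    (C : Matrix (Fin Ma) (Fin Mb) ℝ) (lam N : ℝ) (hlam : 0 < lam) (hN : 0 < N)
    (u : Fin Ma → ℝ) (v : Fin Mb → ℝ)
    (s : ℝ) (hs : s = ∑ i, ∑ j, Real.exp (lam * (u i + v j - C i j) - 1)) :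
    (s ≤ 1 →
      sSup {x : ℝ | ∃ (a : Fin Ma → ℝ) (b : Fin Mb → ℝ),
          (∀ i, 0 < a i) ∧ (∀ j, 0 < b j) ∧ (∑ i, a i = ∑ j, b j) ∧ (∑ i, a i ≤ N) ∧
          x = ∑ i, a i * u i + ∑ j, b j * v j - MKlamN C lam N a b}
        = (N / lam) * s) ∧
    (1 ≤ s →
      sSup {x : ℝ | ∃ (a : Fin Ma → ℝ) (b : Fin Mb → ℝ),
          (∀ i, 0 < a i) ∧ (∀ j, 0 < b j) ∧ (∑ i, a i = ∑ j, b j) ∧ (∑ i, a i ≤ N) ∧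
          x = ∑ i, a i * u i + ∑ j, b j * v j - MKlamN C lam N a b}
        = (N / lam) * Real.log s + N / lam) := by
  have hia : Nonempty (Fin Ma) := ⟨⟨0, hMa⟩⟩
  have hib : Nonempty (Fin Mb) := ⟨⟨0, hMb⟩⟩
  have hspos : 0 < s := by
    rw [hs]
    exact Finset.sum_pos (fun i _ => Finset.sum_pos
      (fun j _ => Real.exp_pos _) Finset.univ_nonempty) Finset.univ_nonempty
  constructor
  · intro hs1
    have h := isGreatest_aux Ma Mb hMa hMb C lam N hlam hN u v N hN s hs
      (by nlinarith) le_rfl (by ring)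
    rw [h.csSup_eq, sub_self, zero_mul, zero_add]
    ring
  · intro hs1
    have hcs : (N / s) * s = N := by field_simp
    have h := isGreatest_aux Ma Mb hMa hMb C lam N hlam hN u v (N / s)
      (by positivity) s hs (by rw [hcs]) ?_ (by rw [hcs]) 
    · rw [h.csSup_eq, hcs,
        Real.log_div hN.ne' hspos.ne']
      ring
    · rw [Real.log_div hN.ne' hspos.ne']
      have := Real.log_nonneg hs1
      linarith
end

section
/- (Gradient formula, eq. (15)) Define F : ℝ^{Ma}×ℝ^{Mb} → ℝ by F(u,v) = (N/λ)·s(u,v) if s(u,v) ≤ 1 and F(u,v) = (N/λ)·log s(u,v) + N/λ if s(u,v) ≥ 1, where Q(u,v)_{ij} = e^{λ(u_i + v_j − C_{ij}) − 1} and s(u,v) = ∑_{i,j} Q(u,v)_{ij}. Then F is differentiable everywhere, and its gradient at (u,v) equals N·(Q·1_{Mb}, Qᵀ·1_{Ma}) when s(u,v) ≤ 1, and (N/s(u,v))·(Q·1_{Mb}, Qᵀ·1_{Ma}) when s(u,v) ≥ 1, where Q·1_{Mb} ∈ ℝ^{Ma} is the vector of row sums of Q and Qᵀ·1_{Ma}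 ∈ ℝ^{Mb} is the vector of column sums of Q. -/
open scoped BigOperators

/-- The matrix `Q(u,v)` with entries `e^{λ(u_i + v_j − C_{ij}) − 1}`. -/
noncomputable def Qmat {Ma Mb : ℕ} (C : Matrix (Fin Ma) (Fin Mb) ℝ) (lam : ℝ)
    (u : Fin Ma → ℝ) (v : Fin Mb → ℝ) : Matrix (Fin Ma) (Fin Mb) ℝ :=
  fun i j => Real.exp (lam * (u i + v j - C i j) - 1)

/-- `s(u,v) = ∑_{i,j} Q(u,v)_{ij}`. -/
noncomputable def sQ {Ma Mb : ℕ} (C : Matrix (Fin Ma) (Fin Mb) ℝ) (lam : ℝ)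
    (u : Fin Ma → ℝ) (v : Fin Mb → ℝ) : ℝ :=
  ∑ i, ∑ j, Qmat C lam u v i j

/-- The conjugate `F` of the normalized Sinkhorn distance:
`F(u,v) = (N/λ)·s(u,v)` if `s(u,v) ≤ 1`, and `(N/λ)·log s(u,v) + N/λ` otherwise.
(The two branches agree on `{s = 1}`.) -/
noncomputable def Fconj {Ma Mb : ℕ} (C : Matrix (Fin Ma) (Fin Mb) ℝ) (lam N : ℝ)
    (x : (Fin Ma → ℝ) × (Fin Mb → ℝ)) : ℝ :=
  if sQ C lam x.1 x.2 ≤ 1 then (N / lam) * sQ C lam x.1 x.2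
  else (N / lam) * Real.log (sQ C lam x.1 x.2) + N / lam

/-!
`F = (N/λ) · g ∘ s` with `g t = t` for `t ≤ 1` and `g t = log t + 1` for `t ≥ 1`. The two
branches of `g` have the same value and slope at `t = 1`, so `g` is differentiable, and the
chain rule gives `∇F = (N/λ) · g'(s) · ∇s`. Since `∂Q_{ij}/∂u_i = ∂Q_{ij}/∂v_j = λ Q_{ij}`,
the gradient `∇s` is `λ` times the pair of row and column sums of `Q`, and the factor `λ`
cancels.
-/

theorem HasDerivAt.ite_le {E : Type*} [NormedAddCommGroup E] [NormedSpace ℝ E]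
    {f g : ℝ → E} {f' : E} {a : ℝ} (hf : HasDerivAt f f' a) (hg : HasDerivAt g f' a)
    (hfg : f a = g a) : HasDerivAt (fun t => if t ≤ a then f t else g t) f' a := by
  have hle : HasDerivWithinAt (fun t => if t ≤ a then f t else g t) f' (Set.Iic a) a :=
    hf.hasDerivWithinAt.congr (fun t ht => if_pos ht) (if_pos le_rfl)
  have hge : HasDerivWithinAt (fun t => if t ≤ a then f t else g t) f' (Set.Ici a) a := by
    refine hg.hasDerivWithinAt.congr (fun t ht => ?_) (by simp [hfg])
    split_ifs with h
    · rw [le_antisymm h ht, hfg]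
    · rfl
  simpa [Set.Iic_union_Ici] using hle.union hge

noncomputable def linLog (t : ℝ) : ℝ := if t ≤ 1 then t else Real.log t + 1

theorem hasDerivAt_linLog (t : ℝ) : HasDerivAt linLog (if t ≤ 1 then 1 else t⁻¹) t := by
  rcases lt_trichotomy t 1 with h | rfl | h
  · rw [if_pos h.le]
    refine (hasDerivAt_id t).congr_of_eventuallyEq ?_
    filter_upwards [Iio_mem_nhds h] with x hx using if_pos hx.le
  · have hlog : HasDerivAt (fun t => Real.log t + 1) 1 1 := by
      simpa using (Real.hasDerivAt_log one_ne_zero).add_const 1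
    rw [if_pos le_rfl]
    exact (hasDerivAt_id' 1).ite_le hlog (by simp)
  · rw [if_neg h.not_ge]
    refine ((Real.hasDerivAt_log (by positivity)).add_const 1).congr_of_eventuallyEq ?_
    filter_upwards [Ioi_mem_nhds h] with x hx using if_neg hx.not_ge

theorem Fconj_eq_linLog_comp {Ma Mb : ℕ} (C : Matrix (Fin Ma) (Fin Mb) ℝ) (lam N : ℝ) :
    Fconj C lam N = fun x => (N / lam) * linLog (sQ C lam x.1 x.2) := by
  funext x
  unfold Fconj linLog
  split_ifs <;> ring

section MarginalPairing

variable {ι κ : Type*} [Fintype ι] [Fintype κ]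

noncomputable def marginalPairing (Q : Matrix ι κ ℝ) : ((ι → ℝ) × (κ → ℝ)) →L[ℝ] ℝ :=
  ∑ i, ∑ j, Q i j •
    ((ContinuousLinearMap.proj i : (ι → ℝ) →L[ℝ] ℝ).comp (ContinuousLinearMap.fst ℝ _ _) +
      (ContinuousLinearMap.proj j : (κ → ℝ) →L[ℝ] ℝ).comp (ContinuousLinearMap.snd ℝ _ _))

theorem marginalPairing_apply (Q : Matrix ι κ ℝ) (du : ι → ℝ) (dv : κ → ℝ) :
    marginalPairing Q (du, dv) = ∑ i, (∑ j, Q i j) * du i + ∑ j, (∑ i, Q i j) * dv j := by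
  simp only [marginalPairing, sum_apply, smul_apply, add_apply,
    ContinuousLinearMap.comp_apply, ContinuousLinearMap.coe_fst',
    ContinuousLinearMap.coe_snd', ContinuousLinearMap.proj_apply, smul_eq_mul, mul_add,
    Finset.sum_add_distrib, Finset.sum_mul]
  rw [Finset.sum_comm (f := fun i j => Q i j * dv j)]

end MarginalPairing

theorem hasFDerivAt_sQ {Ma Mb : ℕ} (C : Matrix (Fin Ma) (Fin Mb) ℝ) (lam : ℝ)
    (u : Fin Ma → ℝ) (v : Fin Mb → ℝ) :
    HasFDerivAt (fun x : (Fin Ma → ℝ) × (Fin Mb → ℝ) => sQ C lam x.1 x.2)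
      (lam • marginalPairing (Qmat C lam u v)) (u, v) := by
  simp only [marginalPairing, Finset.smul_sum]
  refine HasFDerivAt.fun_sum fun i _ => HasFDerivAt.fun_sum fun j _ => ?_
  have hlin :=
    ((ContinuousLinearMap.proj i : (Fin Ma → ℝ) →L[ℝ] ℝ).comp
        (ContinuousLinearMap.fst ℝ _ (Fin Mb → ℝ)) +
      (ContinuousLinearMap.proj j : (Fin Mb → ℝ) →L[ℝ] ℝ).comp
        (ContinuousLinearMap.snd ℝ (Fin Ma → ℝ) _)).hasFDerivAt (x := (u, v))
  rw [smul_comm]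
  exact (((hlin.sub_const (C i j)).const_mul lam).sub_const 1).exp

theorem hasFDerivAt_Fconj {Ma Mb : ℕ} (C : Matrix (Fin Ma) (Fin Mb) ℝ) {lam : ℝ}
    (hlam : lam ≠ 0) (N : ℝ) (u : Fin Ma → ℝ) (v : Fin Mb → ℝ) :
    HasFDerivAt (Fconj C lam N)
      ((if sQ C lam u v ≤ 1 then N else N / sQ C lam u v) •
        marginalPairing (Qmat C lam u v)) (u, v) := by
  have hchain := ((hasDerivAt_linLog (sQ C lam u v)).comp_hasFDerivAt (u, v)
    (hasFDerivAt_sQ C lam u v)).const_mul (N / lam)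
  rw [smul_smul, smul_smul] at hchain
  rw [Fconj_eq_linLog_comp]
  refine hchain.congr_fderiv (congrArg (· • _) ?_)
  split_ifs <;> field_simp

theorem gradient_formula_Fconj_general (Ma Mb : ℕ)
    (C : Matrix (Fin Ma) (Fin Mb) ℝ) (lam N : ℝ) (hlam : 0 < lam) :
    Differentiable ℝ (Fconj C lam N) ∧
    ∀ (u : Fin Ma → ℝ) (v : Fin Mb → ℝ) (du : Fin Ma → ℝ) (dv : Fin Mb → ℝ),
      fderiv ℝ (Fconj C lam N) (u, v) (du, dv)
        = (if sQ C lam u v ≤ 1 then N else N / sQ C lam u v)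
          * ((∑ i, (∑ j, Qmat C lam u v i j) * du i)
            + (∑ j, (∑ i, Qmat C lam u v i j) * dv j)) := by
  refine ⟨fun x => (hasFDerivAt_Fconj C hlam.ne' N x.1 x.2).differentiableAt, ?_⟩
  intro u v du dv
  rw [(hasFDerivAt_Fconj C hlam.ne' N u v).fderiv, smul_apply, marginalPairing_apply, smul_eq_mul]

/-- (Gradient formula, eq. (15)) `F` is differentiable everywhere, and its
gradient at `(u,v)` is `N·(Q·1, Qᵀ·1)` when `s(u,v) ≤ 1` and
`(N/s(u,v))·(Q·1, Qᵀ·1)` when `s(u,v) ≥ 1`, where `Q·1` and `Qᵀ·1` are the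
row- and column-sum vectors of `Q(u,v)`. (The coefficients agree on `{s = 1}`,
and the gradient is expressed through the action of the derivative on a
displacement `(du,dv)`.) -/
theorem gradient_formula_Fconj (Ma Mb : ℕ) (hMa : 0 < Ma) (hMb : 0 < Mb)
    (C : Matrix (Fin Ma) (Fin Mb) ℝ) (lam N : ℝ) (hlam : 0 < lam) (hN : 0 < N) :
    Differentiable ℝ (Fconj C lam N) ∧
    ∀ (u : Fin Ma → ℝ) (v : Fin Mb → ℝ) (du : Fin Ma → ℝ) (dv : Fin Mb → ℝ),
      fderiv ℝ (Fconj C lam N) (u, v) (du, dv)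
        = (if sQ C lam u v ≤ 1 then N else N / sQ C lam u v)
          * ((∑ i, (∑ j, Qmat C lam u v i j) * du i)
            + (∑ j, (∑ i, Qmat C lam u v i j) * dv j)) :=
  gradient_formula_Fconj_general Ma Mb C lam N hlam
end

section
/- (Proposition 3, scalar form) Let τ > 0, λ > 0, N > 0 and p, c ∈ ℝ. The function q ↦ (q − p)²/(2τ) + (N/λ)·e^{λ(q − c) − 1} attains its minimum over ℝ at a unique point q*, and q* is characterized by the equation λ(p − q*)·e^{λ(p − q*)} = λτN·e^{λ(p − c) − 1}; equivalently q* = p − (1/λ)·W(λτN·e^{λ(p − c) − 1}), where W(z) denotes the unique real solution w ≥ 0 of w·e^w = z for z ≥ 0. -/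
/-! The point `q₀ = p − w/λ`, with `w ≥ 0` solving `w·eʷ = λτN·e^{λ(p−c)−1}` (intermediate value
theorem), is a critical point of the objective. Since the quadratic part is `1/τ`-strongly convex
and the exponential lies above its tangent line at `q₀`, the objective exceeds its value at `q₀`
by at least `(q − q₀)²/(2τ)`, so `q₀` is the unique minimizer. -/

open Real

noncomputable def sinkhornProxObjective (tau lam N p c q : ℝ) : ℝ :=
  (q - p) ^ 2 / (2 * tau) + (N / lam) * exp (lam * (q - c) - 1)

lemma exists_nonneg_mul_exp_eq {z : ℝ} (hz : 0 ≤ z) : ∃ w, 0 ≤ w ∧ w * exp w = z := by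
  have hcont : ContinuousOn (fun w : ℝ => w * exp w) (Set.Icc 0 z) := by fun_prop
  have hz_mem : z ∈ Set.Icc (0 * exp 0) (z * exp z) :=
    ⟨by simpa using hz, le_mul_of_one_le_right hz (one_le_exp hz)⟩
  obtain ⟨w, hw, hwz⟩ := intermediate_value_Icc hz hcont hz_mem
  exact ⟨w, hw.1, hwz⟩

lemma exp_mul_one_add_sub_le_exp (x y : ℝ) : exp x * (1 + (y - x)) ≤ exp y := by
  calc exp x * (1 + (y - x)) ≤ exp x * exp (y - x) := by
        gcongr
        linarith [add_one_le_exp (y - x)]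
    _ = exp y := by rw [← exp_add, add_sub_cancel]

lemma eq_iff_forall_le_of_quadratic_growth {f : ℝ → ℝ} {x₀ t : ℝ} (ht : 0 < t)
    (hgrowth : ∀ x, f x₀ + (x - x₀) ^ 2 / t ≤ f x) (x : ℝ) :
    (∀ y, f x ≤ f y) ↔ x = x₀ := by
  constructor
  · intro hmin
    have hsq : (x - x₀) ^ 2 / t ≤ 0 := by linarith [hgrowth x, hmin x₀]
    have : (x - x₀) ^ 2 ≤ 0 := by simpa using (div_le_iff₀ ht).1 hsq
    exact sub_eq_zero.1 (pow_eq_zero_iff two_ne_zero |>.1 (le_antisymm this (sq_nonneg _)))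
  · rintro rfl y
    linarith [hgrowth y, div_nonneg (sq_nonneg (y - x)) ht.le]

section

variable {tau lam N p c : ℝ}

lemma sinkhornProxObjective_add_sq_le (hlam : 0 < lam) (hN : 0 ≤ N) {q₀ : ℝ}
    (hcrit : (q₀ - p) / tau + N * exp (lam * (q₀ - c) - 1) = 0) (q : ℝ) :
    sinkhornProxObjective tau lam N p c q₀ + (q - q₀) ^ 2 / (2 * tau)
      ≤ sinkhornProxObjective tau lam N p c q := by
  have htangent := exp_mul_one_add_sub_le_exp (lam * (q₀ - c) - 1) (lam * (q - c) - 1)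
  rw [show lam * (q - c) - 1 - (lam * (q₀ - c) - 1) = lam * (q - q₀) by ring] at htangent
  replace htangent := mul_le_mul_of_nonneg_left htangent (by positivity : 0 ≤ N / lam)
  set E := exp (lam * (q₀ - c) - 1)
  have hexpand : (N / lam) * (E * (1 + lam * (q - q₀)))
      = (N / lam) * E + N * E * (q - q₀) := by
    field_simp
  have hsq : (q - p) ^ 2 / (2 * tau)
      = (q₀ - p) ^ 2 / (2 * tau) + (q₀ - p) / tau * (q - q₀) + (q - q₀) ^ 2 / (2 * tau) := by
    ring
  have hcrit' : (q₀ - p) / tau * (q - q₀) + N * E * (q - q₀) = 0 := by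
    rw [← add_mul, hcrit, zero_mul]
  unfold sinkhornProxObjective
  linarith

lemma sinkhorn_critical_of_mul_exp_eq (htau : tau ≠ 0) (hlam : lam ≠ 0) {w : ℝ}
    (hw : w * exp w = lam * tau * N * exp (lam * (p - c) - 1)) :
    (p - w / lam - p) / tau + N * exp (lam * (p - w / lam - c) - 1) = 0 := by
  have hexp : exp (lam * (p - w / lam - c) - 1) = exp (lam * (p - c) - 1) / exp w := by
    rw [← exp_sub]
    congr 1
    field_simp
    ring
  rw [hexp]
  field_simp
  linear_combination -hw

end

/-- (Proposition 3, scalar form) For `τ, λ, N > 0` and `p, c ∈ ℝ`, the function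
`q ↦ (q − p)²/(2τ) + (N/λ)·e^{λ(q − c) − 1}` attains its minimum over `ℝ` at a
unique point `q*`, characterized by
`λ(p − q*)·e^{λ(p − q*)} = λτN·e^{λ(p − c) − 1}`; equivalently
`q* = p − (1/λ)·W(λτN·e^{λ(p − c) − 1})` where `W(z)` is the unique `w ≥ 0`
with `w·e^w = z`. -/
theorem prox_sinkhorn_scalar (tau lam N p c : ℝ)
    (htau : 0 < tau) (hlam : 0 < lam) (hN : 0 < N) :
    (∃! q : ℝ, ∀ q' : ℝ,
        (q - p) ^ 2 / (2 * tau) + (N / lam) * Real.exp (lam * (q - c) - 1)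
          ≤ (q' - p) ^ 2 / (2 * tau) + (N / lam) * Real.exp (lam * (q' - c) - 1)) ∧
    (∀ q : ℝ,
      (∀ q' : ℝ,
        (q - p) ^ 2 / (2 * tau) + (N / lam) * Real.exp (lam * (q - c) - 1)
          ≤ (q' - p) ^ 2 / (2 * tau) + (N / lam) * Real.exp (lam * (q' - c) - 1)) →
      lam * (p - q) * Real.exp (lam * (p - q))
          = lam * tau * N * Real.exp (lam * (p - c) - 1) ∧
      ∃ w : ℝ, 0 ≤ w ∧
        w * Real.exp w = lam * tau * N * Real.exp (lam * (p - c) - 1) ∧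
        q = p - (1 / lam) * w) := by
  obtain ⟨w, hw0, hw⟩ := exists_nonneg_mul_exp_eq (z := lam * tau * N * exp (lam * (p - c) - 1))
    (by positivity)
  have hcrit := sinkhorn_critical_of_mul_exp_eq htau.ne' hlam.ne' hw
  have hmin_iff := eq_iff_forall_le_of_quadratic_growth (by positivity)
    (sinkhornProxObjective_add_sq_le hlam hN.le hcrit)
  refine ⟨⟨p - w / lam, (hmin_iff _).2 rfl, fun q hq => (hmin_iff q).1 hq⟩, fun q hq => ?_⟩
  have hq : q = p - w / lam := (hmin_iff q).1 hq
  have hlam_pq : lam * (p - q) = w := by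
    rw [hq]
    field_simp
    ring
  exact ⟨by rw [hlam_pq, hw], w, hw0, hw, by rw [hq, one_div_mul_eq_div]⟩
end
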